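/- For every integer N ≥ 1, every m ≥ 1, every permutation α of {1,…,m}, and all 1 ≤ k,l ≤ N, the N×N matrix M_α = Σ_{i₁,…,i_m=1}^N X_{i₁ i_{α(1)}} X_{i₂ i_{α(2)}} ⋯ X_{i_m i_{α(m)}} commutes with X_{kl}: M_α · X_{kl} = X_{kl} · M_α. -/

import Mathlib

/-!
A matrix `A` with `A j.rev i.rev = -A i j` lies in `so(N)` for the antidiagonal form, and for such
`A` the bracket `⁅A, X_{cd}⁆ = ∑ₑ (A e c • X_{ed} - A d e • X_{ce})` moves one index of the
generator at a time. By the Leibniz rule, `⁅X_{kl}, M_α⁆` is then a sum over positions `p` of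
words in which a single index has been moved. The summation index `i p` occurs twice in the word
for `i`, as the row index at position `p` and as the column index at position `α⁻¹ p`; the
substitution `(i, e) ↦ (update i p e, i p)` identifies the two contributions, which cancel.
-/

open Matrix

/-- The standard generators `X_{ij} = E_{ij} - E_{N+1-j, N+1-i}` of `so(N)`,
as `N × N` matrices over `ℚ` (indices zero-based, so `N+1-i` becomes `Fin.rev i`). -/
noncomputable def soGen (N : ℕ) (i j : Fin N) : Matrix (Fin N) (Fin N) ℚ :=
  Matrix.single i j 1 - Matrix.single j.rev i.rev 1

/-- `W_N(α) = Tr (Σ_{i₁,…,i_m} X_{i₁ i_{α(1)}} ⋯ X_{i_m i_{α(m)}})`,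
the (un-normalized) standard-representation so(N) weight of a permutation
`α` of `{1,…,m}`; the product is taken in order of increasing position. -/
noncomputable def soWeight (N m : ℕ) (α : Equiv.Perm (Fin m)) : ℚ :=
  Matrix.trace (∑ i : Fin m → Fin N,
    ((List.finRange m).map fun k => soGen N (i k) (i (α k))).prod)

open Function

theorem lie_ofFn_prod {R : Type*} [Ring R] (A : R) {m : ℕ} (f : Fin m → R) :
    ⁅A, (List.ofFn f).prod⁆ = ∑ p, (List.ofFn (update f p ⁅A, f p⁆)).prod := by
  induction m with
  | zero => simp [Ring.lie_def]
  | succ m ih =>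
    have ofFn_update_zero (x : R) :
        List.ofFn (update f 0 x) = x :: List.ofFn fun i => f i.succ := by
      simp [List.ofFn_succ]
    have ofFn_update_succ (p : Fin m) (x : R) :
        List.ofFn (update f p.succ x) = f 0 :: List.ofFn (update (fun i => f i.succ) p x) := by
      rw [List.ofFn_succ, update_of_ne (Fin.succ_ne_zero p).symm]
      exact congrArg (f 0 :: List.ofFn ·)
        (update_comp_eq_of_injective f (Fin.succ_injective m) p x)
    rw [Fin.sum_univ_succ]
    simp only [ofFn_update_zero, ofFn_update_succ, List.ofFn_succ, List.prod_cons,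
      ← Finset.mul_sum, ← ih]
    simp only [Ring.lie_def, mul_sub, sub_mul, mul_assoc]
    abel

theorem Fintype.sum_sum_update_swap {ι β M : Type*} [Fintype ι] [DecidableEq ι] [Fintype β]
    [AddCommMonoid M] (p : ι) (f : (ι → β) → β → M) :
    ∑ i, ∑ e, f i e = ∑ i, ∑ e, f (update i p e) (i p) := by
  let σ : (ι → β) × β → (ι → β) × β := fun x => (update x.1 p x.2, x.1 p)
  have hσ : Involutive σ := fun x => by simp [σ]
  simp only [← Fintype.sum_prod_type']
  exact (Equiv.sum_comp (hσ.toPerm σ) fun x => f x.1 x.2).symm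

theorem soGen_apply {N : ℕ} (a b x y : Fin N) :
    soGen N a b x y =
      (if a = x ∧ b = y then 1 else 0) - (if b.rev = x ∧ a.rev = y then 1 else 0) := by
  simp [soGen, single_apply]

theorem soGen_apply_rev_rev {N : ℕ} (k l i j : Fin N) :
    soGen N k l j.rev i.rev = -soGen N k l i j := by
  simp only [soGen_apply, Fin.rev_eq_iff, Fin.rev_rev, and_comm (a := l = j),
    and_comm (a := l = i.rev)]
  abel

theorem lie_soGen {N : ℕ} {A : Matrix (Fin N) (Fin N) ℚ}
    (hA : ∀ i j, A j.rev i.rev = -A i j) (c d : Fin N) :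
    ⁅A, soGen N c d⁆ = ∑ e, (A e c • soGen N e d - A d e • soGen N c e) := by
  ext x y
  have hAc := hA c.rev y
  have hAd := hA x d.rev
  simp only [Fin.rev_rev] at hAc hAd
  have sum_ite_rev_eq (a : Fin N) (f : Fin N → ℚ) :
      ∑ e, (if e.rev = a then f e else 0) = f a.rev := by
    simp only [Fin.rev_eq_iff, Finset.sum_ite_eq', Finset.mem_univ, if_true]
  simp only [Ring.lie_def, Matrix.sub_apply, mul_apply, soGen_apply, ite_and, mul_sub, mul_ite,
    mul_one, mul_zero, Finset.sum_sub_distrib, Finset.sum_ite_eq, Finset.mem_univ, ↓reduceIte,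
    sub_mul, ite_mul, one_mul, zero_mul, Finset.sum_ite_irrel, Finset.sum_const_zero,
    Matrix.sum_apply, Matrix.smul_apply, smul_eq_mul, Finset.sum_ite_eq', sum_ite_rev_eq, hAc, hAd]
  split_ifs <;> ring

noncomputable def soWord {N m : ℕ} (a b : Fin m → Fin N) : Matrix (Fin N) (Fin N) ℚ :=
  (List.ofFn fun j => soGen N (a j) (b j)).prod

theorem lie_soWord {N m : ℕ} {A : Matrix (Fin N) (Fin N) ℚ}
    (hA : ∀ i j, A j.rev i.rev = -A i j) (a b : Fin m → Fin N) :
    ⁅A, soWord a b⁆ = ∑ p, ∑ e,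
      (A e (a p) • soWord (update a p e) b - A (b p) e • soWord a (update b p e)) := by
  rw [soWord, lie_ofFn_prod]
  refine Finset.sum_congr rfl fun p _ => ?_
  set L := (MultilinearMap.mkPiAlgebraFin ℚ m (Matrix (Fin N) (Fin N) ℚ)).toLinearMap
    (fun j => soGen N (a j) (b j)) p
  have soWord_update_left (e : Fin N) : soWord (update a p e) b = L (soGen N e (b p)) :=
    congrArg (fun f => (List.ofFn f).prod)
      (funext (apply_update (fun j x => soGen N x (b j)) a p e))
  have soWord_update_right (e : Fin N) : soWord a (update b p e) = L (soGen N (a p) e) :=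
    congrArg (fun f => (List.ofFn f).prod)
      (funext (apply_update (fun j x => soGen N (a j) x) b p e))
  change L _ = _
  simp only [lie_soGen hA, map_sum, map_sub, map_smul, soWord_update_left, soWord_update_right]

theorem soMatrix_commutes_general (N m : ℕ)
    (α : Equiv.Perm (Fin m)) (k l : Fin N) :
    (∑ i : Fin m → Fin N,
        ((List.finRange m).map fun j => soGen N (i j) (i (α j))).prod) * soGen N k l =
      soGen N k l *
        (∑ i : Fin m → Fin N,
          ((List.finRange m).map fun j => soGen N (i j) (i (α j))).prod) := by
  set X := soGen N k l
  simp only [← List.ofFn_eq_map]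
  change (∑ i, soWord i (i ∘ α)) * X = X * ∑ i, soWord i (i ∘ α)
  refine (commute_iff_lie_eq.2 ?_).symm.eq
  let G (q : Fin m) : Matrix (Fin N) (Fin N) ℚ :=
    ∑ i : Fin m → Fin N, ∑ e, X (i q) e • soWord i (update i q e ∘ α)
  have row_update (p : Fin m) :
      ∑ i : Fin m → Fin N, ∑ e, X e (i p) • soWord (update i p e) (i ∘ α) = G p := by
    rw [Fintype.sum_sum_update_swap p]
    simp [G]
  have column_update (p : Fin m) :
      ∑ i : Fin m → Fin N, ∑ e, X ((i ∘ α) p) e • soWord i (update (i ∘ α) p e) = G (α p) := by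
    simp only [G, update_comp_equiv, Equiv.symm_apply_apply, Function.comp_apply]
  calc ⁅X, ∑ i, soWord i (i ∘ α)⁆
      = ∑ i : Fin m → Fin N, ∑ p, ∑ e, (X e (i p) • soWord (update i p e) (i ∘ α)
          - X ((i ∘ α) p) e • soWord i (update (i ∘ α) p e)) := by
        simp only [Ring.lie_def, Finset.mul_sum, Finset.sum_mul, ← Finset.sum_sub_distrib]
        simp only [← Ring.lie_def, lie_soWord (A := X) (soGen_apply_rev_rev k l)]
    _ = ∑ p, (G p - G (α p)) := by
        rw [Finset.sum_comm]
        simp only [Finset.sum_sub_distrib, row_update, column_update]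
    _ = 0 := by rw [Finset.sum_sub_distrib, Equiv.sum_comp α G, sub_self]

/-- The matrix `M_α = Σ_{i₁,…,i_m} X_{i₁ i_{α(1)}} ⋯ X_{i_m i_{α(m)}}` commutes
with every generator `X_{kl}` (it is the standard-representation image of a
central element of `U so(N)`). -/
theorem soMatrix_commutes (N m : ℕ) (hN : 1 ≤ N) (hm : 1 ≤ m)
    (α : Equiv.Perm (Fin m)) (k l : Fin N) :
    (∑ i : Fin m → Fin N,
        ((List.finRange m).map fun j => soGen N (i j) (i (α j))).prod) * soGen N k l =
      soGen N k l *
        (∑ i : Fin m → Fin N,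
          ((List.finRange m).map fun j => soGen N (i j) (i (α j))).prod) :=
  soMatrix_commutes_general N m α k l
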